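/- arXiv:math/0608070 — 3 statements merged into one kernel-verified Lean document; each statement's English description precedes it below -/
import Mathlib

section
/- Suppose ψ(x) = 0, x is not a critical point of ψ, and y ≠ 0. Define V = {v ∈ ℂⁿ : Σ_k ∂ψ/∂zᵏ(x) vᵏ = 0} and W = {w ∈ ℂⁿ : Σ_l ∂ψ/∂z̄ˡ(x) w^{l̄} = 0}, and the Levi form Q : V × W → ℂ by Q(v,w) = Σ_{k,l} ∂²ψ/∂zᵏ∂z̄ˡ(x) vᵏ w^{l̄}. Then the matrix Γ at (x,y) is invertible if and only if the Levi form Q is nondegenerate. -/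
open Complex ComplexConjugate Matrix

/-- Wirtinger derivative `∂f/∂zᵏ` of a function on `ℂⁿ`. -/
noncomputable def wirtZ {n : ℕ} (f : (Fin n → ℂ) → ℂ) (k : Fin n) (z : Fin n → ℂ) : ℂ :=
  (1 / 2) * (fderiv ℝ f z (Pi.single k 1) - Complex.I * fderiv ℝ f z (Pi.single k Complex.I))

/-- Wirtinger derivative `∂f/∂z̄ᵏ` of a function on `ℂⁿ`. -/
noncomputable def wirtZbar {n : ℕ} (f : (Fin n → ℂ) → ℂ) (k : Fin n) (z : Fin n → ℂ) : ℂ :=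
  (1 / 2) * (fderiv ℝ f z (Pi.single k 1) + Complex.I * fderiv ℝ f z (Pi.single k Complex.I))

lemma span_aux {n : ℕ} (a φ : Fin n → ℂ) (k₀ : Fin n) (hk₀ : a k₀ ≠ 0)
    (h : ∀ v : Fin n → ℂ, ∑ k, a k * v k = 0 → ∑ k, φ k * v k = 0) :
    ∃ c : ℂ, ∀ j, φ j = c * a j := by
  refine ⟨φ k₀ / a k₀, fun j => ?_⟩
  have hv0 : ∑ k, a k * (a k₀ * (Pi.single j 1 : Fin n → ℂ) k - a j * (Pi.single k₀ 1 : Fin n → ℂ) k) = 0 := by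
    simp [mul_sub, Finset.sum_sub_distrib, Pi.single_apply, mul_ite]
    ring
  have hv := h _ hv0
  simp [mul_sub, Finset.sum_sub_distrib, Pi.single_apply, mul_ite] at hv
  field_simp
  linear_combination hv

lemma key {n : ℕ} (A : Fin n → Fin n → ℂ) (a b : Fin n → ℂ) (y : ℂ)
    (hy : y ≠ 0) (k₀ : Fin n) (hak : a k₀ ≠ 0) :
    (∃ u ≠ 0, (Matrix.fromBlocks
      (Matrix.of fun k l => A k l * (y * conj y))
      (Matrix.of fun k (_ : Unit) => a k * y)
      (Matrix.of fun (_ : Unit) l => b l * conj y)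
      (Matrix.of fun _ _ => (0:ℂ))).mulVec u = 0) ↔
    ¬ (∀ w : Fin n → ℂ, (∑ l, b l * w l) = 0 → w ≠ 0 →
        ∃ v : Fin n → ℂ, (∑ k, a k * v k) = 0 ∧ (∑ k, ∑ l, A k l * v k * w l) ≠ 0) := by
  have hyc : conj y ≠ 0 := by simpa using hy
  constructor
  · rintro ⟨u, hu, hmul⟩
    push_neg
    set w : Fin n → ℂ := fun l => u (Sum.inl l) with hwdef
    set t : ℂ := u (Sum.inr ()) with htdef
    have h1 : ∀ k, (∑ l, A k l * (y * conj y) * w l) + a k * y * t = 0 := by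
      intro k
      have := congrFun hmul (Sum.inl k)
      simpa [Matrix.mulVec, dotProduct, Fintype.sum_sum_type] using this
    have h2 : (∑ l, b l * conj y * w l) = 0 := by
      have := congrFun hmul (Sum.inr ())
      simpa [Matrix.mulVec, dotProduct, Fintype.sum_sum_type] using this
    have hw : (∑ l, b l * w l) = 0 := by
      have h3 : conj y * ∑ l, b l * w l = 0 := by
        rw [Finset.mul_sum, ← h2]
        exact Finset.sum_congr rfl fun _ _ => by ring
      exact (mul_eq_zero.mp h3).resolve_left hyc
    refine ⟨w, hw, ?_, ?_⟩
    · intro hw0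
      have ht : t = 0 := by
        have h := h1 k₀
        simp only [hw0, Pi.zero_apply, mul_zero, Finset.sum_const_zero, zero_add] at h
        rcases mul_eq_zero.mp h with h' | h'
        · exact absurd ((mul_eq_zero.mp h').resolve_right hy) hak
        · exact h'
      apply hu
      funext j
      rcases j with k | ⟨⟩
      · exact congrFun hw0 k
      · exact ht
    · intro v hv
      have hS : ∀ k, (y * conj y) * ∑ l, A k l * w l = -(a k * y * t) := by
        intro k
        have e : (∑ l, A k l * (y * conj y) * w l) = (y * conj y) * ∑ l, A k l * w l := by
          rw [Finset.mul_sum]; exact Finset.sum_congr rfl fun _ _ => by ring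
        linear_combination h1 k - e
      have hz : (y * conj y) * (∑ k, ∑ l, A k l * v k * w l) = 0 := by
        rw [Finset.mul_sum]
        have e : ∀ k ∈ Finset.univ, (y * conj y) * ∑ l, A k l * v k * w l
            = (-(y * t)) * (a k * v k) := by
          intro k _
          have e2 : (y * conj y) * (∑ l, A k l * v k * w l)
              = ((y * conj y) * ∑ l, A k l * w l) * v k := by
            rw [Finset.mul_sum, Finset.mul_sum, Finset.sum_mul]
            exact Finset.sum_congr rfl fun _ _ => by ring
          rw [e2, hS k]; ring
        rw [Finset.sum_congr rfl e, ← Finset.mul_sum]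
        have e3 : (∑ k, a k * v k) = 0 := hv
        rw [show (∑ k, a k * v k) = 0 from hv, mul_zero]
      exact (mul_eq_zero.mp hz).resolve_left (mul_ne_zero hy hyc)
  · intro h
    push_neg at h
    obtain ⟨w, hwW, hw0, hq⟩ := h
    have hφ : ∀ v : Fin n → ℂ, (∑ k, a k * v k) = 0 → (∑ k, (∑ l, A k l * w l) * v k) = 0 := by
      intro v hv
      rw [← hq v hv]
      exact Finset.sum_congr rfl fun k _ => by
        rw [Finset.sum_mul]; exact Finset.sum_congr rfl fun l _ => by ring
    obtain ⟨c, hc⟩ := span_aux a (fun k => ∑ l, A k l * w l) k₀ hak hφ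
    refine ⟨Sum.elim w (fun _ => -(c * conj y)), ?_, ?_⟩
    · intro h0
      apply hw0
      funext l
      exact congrFun h0 (Sum.inl l)
    · funext j
      rcases j with k | ⟨⟩
      · simp only [Matrix.mulVec, dotProduct, Fintype.sum_sum_type,
          Matrix.fromBlocks_apply₁₁, Matrix.fromBlocks_apply₁₂, Matrix.of_apply,
          Sum.elim_inl, Sum.elim_inr, Finset.univ_unique, Finset.sum_singleton,
          Pi.zero_apply]
        have e : (∑ l, A k l * (y * conj y) * w l) = (y * conj y) * ∑ l, A k l * w l := by
          rw [Finset.mul_sum]; exact Finset.sum_congr rfl fun _ _ => by ring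
        linear_combination e + (y * conj y) * hc k
      · simp only [Matrix.mulVec, dotProduct, Fintype.sum_sum_type,
          Matrix.fromBlocks_apply₂₁, Matrix.fromBlocks_apply₂₂, Matrix.of_apply,
          Sum.elim_inl, Sum.elim_inr, Finset.univ_unique, Finset.sum_singleton,
          Pi.zero_apply]
        have e2 : (∑ l, b l * conj y * w l) = conj y * ∑ l, b l * w l := by
          rw [Finset.mul_sum]; exact Finset.sum_congr rfl fun _ _ => by ring
        linear_combination e2 + conj y * hwW

/-- If ψ(x) = 0, x is not a critical point of ψ, and y ≠ 0, then Γ at (x,y) is invertible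
if and only if the Levi form Q(v,w) = Σ ∂²ψ/∂zᵏ∂z̄ˡ(x) vᵏ w^{l̄} on V × W is nondegenerate. -/
theorem stmt3 {n : ℕ} (U : Set (Fin n → ℂ)) (hU : IsOpen U)
    (ψ : (Fin n → ℂ) → ℝ) (hψ : ContDiffOn ℝ (⊤ : ℕ∞) ψ U)
    (ψC : (Fin n → ℂ) → ℂ) (hψC : ψC = fun z => (ψ z : ℂ))
    (x : Fin n → ℂ) (hx : x ∈ U) (hψx : ψ x = 0)
    (hcrit : ∃ k, wirtZ ψC k x ≠ 0) (y : ℂ) (hy : y ≠ 0)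
    (Γ : Matrix (Fin n ⊕ Unit) (Fin n ⊕ Unit) ℂ)
    (hΓ : Γ = Matrix.fromBlocks
      (Matrix.of fun k l => wirtZ (wirtZbar ψC l) k x * (y * conj y))
      (Matrix.of fun k (_ : Unit) => wirtZ ψC k x * y)
      (Matrix.of fun (_ : Unit) l => wirtZbar ψC l x * conj y)
      (Matrix.of fun _ _ => (ψ x : ℂ)))
    (V W : Set (Fin n → ℂ))
    (hV : V = {v | ∑ k, wirtZ ψC k x * v k = 0})
    (hW : W = {w | ∑ l, wirtZbar ψC l x * w l = 0})
    (Q : (Fin n → ℂ) → (Fin n → ℂ) → ℂ)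
    (hQ : Q = fun v w => ∑ k, ∑ l, wirtZ (wirtZbar ψC l) k x * v k * w l) :
    IsUnit Γ ↔
      ((∀ v ∈ V, v ≠ 0 → ∃ w ∈ W, Q v w ≠ 0) ∧ (∀ w ∈ W, w ≠ 0 → ∃ v ∈ V, Q v w ≠ 0)) := by
  obtain ⟨k₀, hk₀⟩ := hcrit
  -- b = conj a
  have hdiff : DifferentiableAt ℝ ψ x :=
    (hψ.contDiffAt (hU.mem_nhds hx)).differentiableAt (by simp)
  have hfd : ∀ c, fderiv ℝ ψC x c = ((fderiv ℝ ψ x c : ℝ) : ℂ) := by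
    intro c
    have h : HasFDerivAt ψC (Complex.ofRealCLM.comp (fderiv ℝ ψ x)) x := by
      rw [hψC]
      exact Complex.ofRealCLM.hasFDerivAt.comp x hdiff.hasFDerivAt
    rw [h.fderiv]; rfl
  have hconj : ∀ l, wirtZbar ψC l x = conj (wirtZ ψC l x) := by
    intro l
    rw [wirtZ, wirtZbar, hfd, hfd]
    have c1 : conj ((1:ℂ)/2) = 1/2 := by simp [Complex.ext_iff]
    rw [_root_.map_mul, c1, map_sub, _root_.map_mul, Complex.conj_ofReal,
      Complex.conj_ofReal, Complex.conj_I]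
    ring
  have hbk₀ : wirtZbar ψC k₀ x ≠ 0 := by
    rw [hconj]; simpa using hk₀
  set a : Fin n → ℂ := fun k => wirtZ ψC k x with ha
  set b : Fin n → ℂ := fun l => wirtZbar ψC l x with hb
  set A : Fin n → Fin n → ℂ := fun k l => wirtZ (wirtZbar ψC l) k x with hA
  have hΓ0 : Γ = Matrix.fromBlocks
      (Matrix.of fun k l => A k l * (y * conj y))
      (Matrix.of fun k (_ : Unit) => a k * y)
      (Matrix.of fun (_ : Unit) l => b l * conj y)
      (Matrix.of fun _ _ => (0:ℂ)) := by
    rw [hΓ, hψx]; norm_num; exact ⟨rfl, rfl, rfl⟩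
  have hΓT : Γ.transpose = Matrix.fromBlocks
      (Matrix.of fun k l => (fun k l => A l k) k l * (conj y * conj (conj y)))
      (Matrix.of fun k (_ : Unit) => b k * conj y)
      (Matrix.of fun (_ : Unit) l => a l * conj (conj y))
      (Matrix.of fun _ _ => (0:ℂ)) := by
    rw [hΓ0]
    ext i j
    rcases i with k | ⟨⟩ <;> rcases j with l | ⟨⟩ <;>
      simp only [Matrix.transpose_apply, Matrix.fromBlocks_apply₁₁, Matrix.fromBlocks_apply₁₂,
        Matrix.fromBlocks_apply₂₁, Matrix.fromBlocks_apply₂₂, Matrix.of_apply,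
        Complex.conj_conj] <;> ring
  have key2 := key A a b y hy k₀ hk₀
  have key1 := key (fun k l => A l k) b a (conj y) (by simpa using hy) k₀ hbk₀
  rw [← hΓ0] at key2
  rw [← hΓT] at key1
  have hswap : ∀ v w : Fin n → ℂ,
      (∑ k, ∑ l, A l k * v k * w l) = ∑ k, ∑ l, A k l * w k * v l := by
    intro v w
    rw [Finset.sum_comm]
    exact Finset.sum_congr rfl fun l _ => Finset.sum_congr rfl fun k _ => by ring
  have hdetT : Γ.det = Γ.transpose.det := (Matrix.det_transpose Γ).symm
  have hdet : IsUnit Γ ↔ Γ.det ≠ 0 := by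
    rw [Matrix.isUnit_iff_isUnit_det, isUnit_iff_ne_zero]
  subst hV hW hQ
  simp only [Set.mem_setOf_eq]
  rw [hdet]
  constructor
  · intro hd
    constructor
    · intro v hvV hv0
      by_contra hcon
      push_neg at hcon
      have : ∃ u ≠ 0, Γ.transpose.mulVec u = 0 := by
        apply key1.mpr
        push_neg
        refine ⟨v, hvV, hv0, fun w hwW => ?_⟩
        rw [hswap w v]
        exact hcon w hwW
      exact hd (hdetT.trans (Matrix.exists_mulVec_eq_zero_iff.mp this))
    · intro w hwW hw0
      by_contra hcon
      push_neg at hcon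
      have : ∃ u ≠ 0, Γ.mulVec u = 0 := by
        apply key2.mpr
        push_neg
        exact ⟨w, hwW, hw0, fun v hvV => hcon v hvV⟩
      exact hd (Matrix.exists_mulVec_eq_zero_iff.mp this)
  · rintro ⟨h1, h2⟩ hd
    have := key2.mp (Matrix.exists_mulVec_eq_zero_iff.mpr hd)
    exact this h2
end

section
/- Suppose ψ(x) = 0, x is not a critical point of ψ, and y ≠ 0. If a nonzero vector (v¹,…,vⁿ,a) ∈ ℂⁿ⁺¹ lies in the kernel of the matrix Γ at (x,y), then the vector v = (v¹,…,vⁿ) is nonzero, v belongs to V = {v : Σ_k ∂ψ/∂zᵏ(x)vᵏ = 0}, and Q(v,w) = 0 for all w ∈ W = {w : Σ_l ∂ψ/∂z̄ˡ(x)w^{l̄} = 0}. -/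
open Complex ComplexConjugate Matrix

/-- If ψ(x) = 0, x is not critical, y ≠ 0, and a nonzero vector (v,a) lies in the kernel of
Γ at (x,y), then v ≠ 0, v ∈ V, and Q(v,w) = 0 for all w ∈ W. -/
theorem stmt4 {n : ℕ} (U : Set (Fin n → ℂ)) (hU : IsOpen U)
    (ψ : (Fin n → ℂ) → ℝ) (hψ : ContDiffOn ℝ (⊤ : ℕ∞) ψ U)
    (ψC : (Fin n → ℂ) → ℂ) (hψC : ψC = fun z => (ψ z : ℂ))
    (x : Fin n → ℂ) (hx : x ∈ U) (hψx : ψ x = 0)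
    (hcrit : ∃ k, wirtZ ψC k x ≠ 0) (y : ℂ) (hy : y ≠ 0)
    (Γ : Matrix (Fin n ⊕ Unit) (Fin n ⊕ Unit) ℂ)
    (hΓ : Γ = Matrix.fromBlocks
      (Matrix.of fun k l => wirtZ (wirtZbar ψC l) k x * (y * conj y))
      (Matrix.of fun k (_ : Unit) => wirtZ ψC k x * y)
      (Matrix.of fun (_ : Unit) l => wirtZbar ψC l x * conj y)
      (Matrix.of fun _ _ => (ψ x : ℂ)))
    (v : Fin n → ℂ) (a : ℂ) (hva : Sum.elim v (fun (_ : Unit) => a) ≠ 0)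
    (hker : Matrix.vecMul (Sum.elim v (fun (_ : Unit) => a)) Γ = 0) :
    v ≠ 0 ∧ (∑ k, wirtZ ψC k x * v k = 0) ∧
      ∀ w : Fin n → ℂ, (∑ l, wirtZbar ψC l x * w l = 0) →
        (∑ k, ∑ l, wirtZ (wirtZbar ψC l) k x * v k * w l) = 0 := by
  have hdψ : DifferentiableAt ℝ ψ x :=
    (hψ.contDiffAt (hU.mem_nhds hx)).differentiableAt (by simp)
  have hfd : ∀ u, fderiv ℝ ψC x u = ((fderiv ℝ ψ x u : ℝ) : ℂ) := by
    intro u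
    have h1 : ψC = Complex.ofRealCLM ∘ ψ := by funext z; simp [hψC]
    rw [h1, fderiv_comp x Complex.ofRealCLM.differentiableAt hdψ,
      Complex.ofRealCLM.fderiv]
    rfl
  have hconj : ∀ k, wirtZbar ψC k x = conj (wirtZ ψC k x) := by
    intro k
    simp only [wirtZ, wirtZbar, hfd, map_sub, _root_.map_mul, _root_.map_one, map_div₀, map_ofNat,
      Complex.conj_ofReal, Complex.conj_I]
    ring
  have hA : ∀ l, (∑ k, v k * (wirtZ (wirtZbar ψC l) k x * (y * conj y)))
      + a * (wirtZbar ψC l x * conj y) = 0 := by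
    intro l
    have h := congrFun hker (Sum.inl l)
    simpa [Matrix.vecMul, dotProduct, Fintype.sum_sum_type, hΓ] using h
  have hB : ∑ k, wirtZ ψC k x * v k = 0 := by
    have h := congrFun hker (Sum.inr ())
    simp [Matrix.vecMul, dotProduct, Fintype.sum_sum_type, hΓ, hψx] at h
    have h2 : (∑ k, wirtZ ψC k x * v k) * y = 0 := by
      rw [Finset.sum_mul, ← h]
      exact Finset.sum_congr rfl fun k _ => by ring
    exact (mul_eq_zero.mp h2).resolve_right hy
  have hvne : v ≠ 0 := by
    intro hv0
    have ha : a ≠ 0 := by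
      intro ha0
      apply hva
      funext i
      cases i with
      | inl k => simp [hv0]
      | inr u => simp [ha0]
    obtain ⟨k, hk⟩ := hcrit
    have := hA k
    simp [hv0] at this
    rcases this with h | h | h
    · exact ha h
    · exact hk (by simpa [hconj k] using congrArg conj h)
    · exact hy (by simpa using congrArg conj h)
  refine ⟨hvne, hB, fun w hw => ?_⟩
  have hsum : (∑ l, ((∑ k, v k * (wirtZ (wirtZbar ψC l) k x * (y * conj y)))
      + a * (wirtZbar ψC l x * conj y)) * w l) = 0 := by
    simp only [hA, zero_mul, Finset.sum_const_zero]
  have hexp : (∑ l, ((∑ k, v k * (wirtZ (wirtZbar ψC l) k x * (y * conj y)))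
      + a * (wirtZbar ψC l x * conj y)) * w l)
      = (∑ k, ∑ l, wirtZ (wirtZbar ψC l) k x * v k * w l) * (y * conj y)
        + (a * conj y) * (∑ l, wirtZbar ψC l x * w l) := by
    simp only [add_mul, Finset.sum_mul, Finset.sum_add_distrib, Finset.mul_sum]
    congr 1
    · rw [Finset.sum_comm]
      exact Finset.sum_congr rfl fun k _ => Finset.sum_congr rfl fun l _ => by ring
    · exact Finset.sum_congr rfl fun l _ => by ring
  rw [hexp, hw, mul_zero, add_zero] at hsum
  rcases mul_eq_zero.mp hsum with h | h
  · exact h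
  · exact absurd h (by simp [hy])
end

section
/- Suppose ψ(x) = 0 and x is not a critical point of ψ. If the Levi form Q is degenerate, i.e., there exists a nonzero v ∈ V with Q(v,w) = 0 for all w ∈ W, then for any y ≠ 0 the matrix Γ at (x,y) has nontrivial kernel: there exists a ∈ ℂ such that (v,a) ∈ ℂⁿ⁺¹ lies in the kernel of Γ. -/
open Complex ComplexConjugate Matrix

/-- If ψ(x) = 0, x is not critical, and the Levi form is degenerate (there is a nonzero
v ∈ V with Q(v,w) = 0 for all w ∈ W), then for any y ≠ 0 the matrix Γ at (x,y) has
nontrivial kernel: (v,a) lies in the kernel of Γ for some a ∈ ℂ. -/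
theorem stmt5 {n : ℕ} (U : Set (Fin n → ℂ)) (hU : IsOpen U)
    (ψ : (Fin n → ℂ) → ℝ) (hψ : ContDiffOn ℝ (⊤ : ℕ∞) ψ U)
    (ψC : (Fin n → ℂ) → ℂ) (hψC : ψC = fun z => (ψ z : ℂ))
    (x : Fin n → ℂ) (hx : x ∈ U) (hψx : ψ x = 0)
    (hcrit : ∃ k, wirtZ ψC k x ≠ 0)
    (v : Fin n → ℂ) (hv0 : v ≠ 0)
    (hvV : ∑ k, wirtZ ψC k x * v k = 0)
    (hQdeg : ∀ w : Fin n → ℂ, (∑ l, wirtZbar ψC l x * w l = 0) →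
      (∑ k, ∑ l, wirtZ (wirtZbar ψC l) k x * v k * w l) = 0) :
    ∀ y : ℂ, y ≠ 0 →
      ∀ Γ : Matrix (Fin n ⊕ Unit) (Fin n ⊕ Unit) ℂ,
        Γ = Matrix.fromBlocks
          (Matrix.of fun k l => wirtZ (wirtZbar ψC l) k x * (y * conj y))
          (Matrix.of fun k (_ : Unit) => wirtZ ψC k x * y)
          (Matrix.of fun (_ : Unit) l => wirtZbar ψC l x * conj y)
          (Matrix.of fun _ _ => (ψ x : ℂ)) →
        ∃ a : ℂ, Matrix.vecMul (Sum.elim v (fun (_ : Unit) => a)) Γ = 0 := by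
  intro y hy Γ hΓ
  classical
  have hdx : DifferentiableAt ℝ ψ x :=
    (hψ.contDiffAt (hU.mem_nhds hx)).differentiableAt (by norm_num)
  have hfd : fderiv ℝ ψC x = Complex.ofRealCLM.comp (fderiv ℝ ψ x) := by
    rw [hψC]
    exact (Complex.ofRealCLM.hasFDerivAt.comp x hdx.hasFDerivAt).fderiv
  set b : Fin n → ℂ := fun l => wirtZbar ψC l x with hb
  set φ : Fin n → ℂ := fun k => wirtZ ψC k x with hφ
  have key : ∀ A B : ℝ, (starRingEnd ℂ) ((1/2 : ℂ) * ((A:ℂ) - Complex.I * B))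
      = (1/2 : ℂ) * ((A:ℂ) + Complex.I * B) := by
    intro A B
    simp [Complex.ext_iff]
  have hconj : ∀ k, b k = conj (φ k) := by
    intro k
    simp only [hb, hφ, wirtZ, wirtZbar, hfd, ContinuousLinearMap.comp_apply,
      Complex.ofRealCLM_apply]
    exact (key _ _).symm
  obtain ⟨k0, hk0⟩ := hcrit
  have hbk0 : b k0 ≠ 0 := by
    rw [hconj]
    simpa using hk0
  set c : Fin n → ℂ := fun l => ∑ k, wirtZ (wirtZbar ψC l) k x * v k with hc
  have hsum : ∀ w : Fin n → ℂ, (∑ l, b l * w l = 0) → ∑ l, c l * w l = 0 := by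
    intro w hw
    have h := hQdeg w hw
    rw [Finset.sum_comm] at h
    calc ∑ l, c l * w l
        = ∑ l, ∑ k, wirtZ (wirtZbar ψC l) k x * v k * w l := by
          simp only [hc, Finset.sum_mul]
      _ = 0 := h
  have hprop : ∀ l, c l * b k0 = c k0 * b l := by
    intro l
    have hw : ∑ m, b m * (b k0 * (Pi.single l 1 : Fin n → ℂ) m - b l * (Pi.single k0 1 : Fin n → ℂ) m) = 0 := by
      simp only [mul_sub, Finset.sum_sub_distrib, mul_left_comm, ← Finset.mul_sum]
      rw [Finset.sum_eq_single l, Finset.sum_eq_single k0]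
      · simp; ring
      · intro m _ hm; simp [Pi.single_apply, hm]
      · simp
      · intro m _ hm; simp [Pi.single_apply, hm]
      · simp
    have h := hsum _ hw
    simp only [mul_sub, Finset.sum_sub_distrib, mul_left_comm, ← Finset.mul_sum] at h
    rw [Finset.sum_eq_single l, Finset.sum_eq_single k0] at h
    · simp at h; linear_combination h
    · intro m _ hm; simp [Pi.single_apply, hm]
    · simp
    · intro m _ hm; simp [Pi.single_apply, hm]
    · simp
  refine ⟨-(c k0 / b k0) * y, ?_⟩
  subst hΓ
  funext j
  cases j with
  | inl l =>
    simp only [Matrix.vecMul, dotProduct, Fintype.sum_sum_type, Sum.elim_inl, Sum.elim_inr,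
      Matrix.fromBlocks_apply₁₁, Matrix.fromBlocks_apply₂₁, Matrix.of_apply,
      Finset.univ_unique, Finset.sum_singleton, Pi.zero_apply]
    have h1 : ∑ k, v k * (wirtZ (wirtZbar ψC l) k x * (y * conj y))
        = c l * (y * conj y) := by
      rw [hc]
      simp only [Finset.sum_mul]
      exact Finset.sum_congr rfl fun k _ => by ring
    rw [h1]
    have := hprop l
    field_simp
    linear_combination (y * conj y) * this
  | inr u =>
    simp only [Matrix.vecMul, dotProduct, Fintype.sum_sum_type, Sum.elim_inl, Sum.elim_inr,
      Matrix.fromBlocks_apply₁₂, Matrix.fromBlocks_apply₂₂, Matrix.of_apply,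
      Finset.univ_unique, Finset.sum_singleton, Pi.zero_apply, hψx]
    have h1 : ∑ k, v k * (wirtZ ψC k x * y) = (∑ k, wirtZ ψC k x * v k) * y := by
      simp only [Finset.sum_mul]
      exact Finset.sum_congr rfl fun k _ => by ring
    rw [h1, hvV]
    simp
end
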